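/- arXiv:2303.15299 — 2 statements merged into one kernel-verified Lean document; each statement's English description precedes it below -/
import Mathlib

section
/- Let A be a real n×n matrix (n ≥ 1) and let β(A) denote the largest real part among the complex eigenvalues of A, i.e. β(A) = max{Re(λ) : λ ∈ σ(A)}, where σ(A) is the spectrum of A regarded as a complex matrix. Then for every κ > 0 there exists a constant ψ(κ) > 0 such that for all t ≥ 0, ‖exp(tA)‖ ≤ ψ(κ)·exp((β(A)+κ)·t), where ‖·‖ is the operator norm and exp denotes the matrix exponential. -/
open scoped Matrix.Norms.L2Operator

/-!
Over `ℂ` the space splits into generalized eigenspaces. On the one for `μ`, `exp (t f)` acts as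
`e^{tμ}` times a polynomial in `t`, and `t^k / k! ≤ e^{κt} / κ^k` absorbs that polynomial into
`e^{κt}`. Hence every orbit `t ↦ e^{-(β+κ)t} exp (t f) w` is bounded on `t ≥ 0`, and the uniform
boundedness principle bounds the operator norms. A real matrix is handled through its
complexification, which does not decrease the L2 operator norm.
-/

open NormedSpace
open scoped Nat

theorem Real.pow_div_factorial_le_exp_mul_div_pow {κ t : ℝ} (hκ : 0 < κ) (ht : 0 ≤ t) (k : ℕ) :
    t ^ k / k ! ≤ Real.exp (κ * t) / κ ^ k := by
  rw [le_div_iff₀ (pow_pos hκ k), div_mul_eq_mul_div, ← mul_pow, mul_comm t]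
  exact Real.pow_div_factorial_le_exp _ (by positivity) k

theorem NormedSpace.exp_eq_exp_smul_exp_sub_algebraMap {𝕜 𝔸 : Type*} [RCLike 𝕜] [NormedRing 𝔸]
    [NormedAlgebra 𝕜 𝔸] [CompleteSpace 𝔸] (x : 𝔸) (z : 𝕜) :
    exp x = exp z • exp (x - algebraMap 𝕜 𝔸 z) := by
  let +nondep : NormedAlgebra ℚ 𝔸 := .restrictScalars ℚ 𝕜 𝔸
  rw [Algebra.smul_def, algebraMap_exp_comm, ← exp_add_of_commute (Algebra.commutes z _),
    add_sub_cancel]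

namespace ContinuousLinearMap

section Complete

variable {𝕜 E : Type*} [RCLike 𝕜] [NormedAddCommGroup E] [NormedSpace 𝕜 E] [CompleteSpace E]

theorem exp_apply_eq_sum_of_pow_apply_eq_zero (f : E →L[𝕜] E) {w : E} {d : ℕ}
    (hw : (f ^ d) w = 0) :
    exp f w = ∑ k ∈ Finset.range d, (k !⁻¹ : 𝕜) • (f ^ k) w := by
  refine ((exp_series_hasSum_exp' (𝕂 := 𝕜) f).mapL (apply 𝕜 E w)).unique
    (hasSum_sum_of_ne_finset_zero fun k hk => ?_)
  obtain ⟨j, rfl⟩ := Nat.exists_eq_add_of_le (not_lt.mp (Finset.mem_range.not.mp hk))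
  rw [apply_apply, smul_apply, add_comm, pow_add, mul_apply_eq_comp, hw, map_zero, smul_zero]

theorem norm_exp_smul_apply_le_of_pow_apply_eq_zero (f : E →L[𝕜] E) {w : E} {d : ℕ}
    (hw : (f ^ d) w = 0) {κ t : ℝ} (hκ : 0 < κ) (ht : 0 ≤ t) :
    ‖exp ((t : 𝕜) • f) w‖ ≤ Real.exp (κ * t) * ∑ k ∈ Finset.range d, ‖(f ^ k) w‖ / κ ^ k := by
  have htw : (((t : 𝕜) • f) ^ d) w = 0 := by rw [smul_pow, smul_apply, hw, smul_zero]
  rw [exp_apply_eq_sum_of_pow_apply_eq_zero _ htw, Finset.mul_sum]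
  refine (norm_sum_le _ _).trans (Finset.sum_le_sum fun k _ => ?_)
  calc ‖(k !⁻¹ : 𝕜) • (((t : 𝕜) • f) ^ k) w‖ = t ^ k / k ! * ‖(f ^ k) w‖ := by
        rw [smul_pow, smul_apply, smul_smul, norm_smul, norm_mul, norm_inv, norm_pow,
          RCLike.norm_natCast, RCLike.norm_ofReal, abs_of_nonneg ht, inv_mul_eq_div]
    _ ≤ Real.exp (κ * t) / κ ^ k * ‖(f ^ k) w‖ := by
        gcongr ?_ * _
        exact Real.pow_div_factorial_le_exp_mul_div_pow hκ ht k
    _ = Real.exp (κ * t) * (‖(f ^ k) w‖ / κ ^ k) := by ring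

end Complete

section Complex

variable {E : Type*} [NormedAddCommGroup E] [NormedSpace ℂ E]

theorem exists_norm_exp_smul_apply_le_of_mem_maxGenEigenspace [CompleteSpace E] (f : E →L[ℂ] E)
    {μ : ℂ} {w : E} (hw : w ∈ Module.End.maxGenEigenspace (f : E →ₗ[ℂ] E) μ) {r : ℝ}
    (hr : μ.re < r) :
    ∃ C, ∀ t : ℝ, 0 ≤ t → ‖exp ((t : ℂ) • f) w‖ ≤ C * Real.exp (r * t) := by
  obtain ⟨d, hd⟩ := (Module.End.mem_maxGenEigenspace _ _ _).mp hw
  have hdw : ((f - μ • 1) ^ d) w = 0 := by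
    rwa [← toLinearMap_one, ← toLinearMap_smul, ← toLinearMap_sub, ← toLinearMap_pow] at hd
  refine ⟨∑ k ∈ Finset.range d, ‖((f - μ • 1) ^ k) w‖ / (r - μ.re) ^ k, fun t ht => ?_⟩
  have hshift : (t : ℂ) • f - algebraMap ℂ (E →L[ℂ] E) (t * μ) = (t : ℂ) • (f - μ • 1) := by
    rw [Algebra.algebraMap_eq_smul_one, smul_sub, smul_smul]
  rw [exp_eq_exp_smul_exp_sub_algebraMap _ ((t : ℂ) * μ), hshift, smul_apply, norm_smul,
    ← Complex.exp_eq_exp_ℂ, Complex.norm_exp, Complex.re_ofReal_mul]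
  calc Real.exp (t * μ.re) * ‖exp ((t : ℂ) • (f - μ • 1)) w‖
      ≤ Real.exp (t * μ.re) * (Real.exp ((r - μ.re) * t) *
          ∑ k ∈ Finset.range d, ‖((f - μ • 1) ^ k) w‖ / (r - μ.re) ^ k) := by
        gcongr
        exact norm_exp_smul_apply_le_of_pow_apply_eq_zero _ hdw (sub_pos.mpr hr) ht
    _ = _ := by rw [← mul_assoc, ← Real.exp_add, mul_comm]; congr 2; ring

variable [FiniteDimensional ℂ E]

theorem exists_norm_exp_smul_apply_le (f : E →L[ℂ] E) {r : ℝ}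
    (hr : ∀ μ ∈ spectrum ℂ f, μ.re < r) (w : E) :
    ∃ C, ∀ t : ℝ, 0 ≤ t → ‖exp ((t : ℂ) • f) w‖ ≤ C * Real.exp (r * t) := by
  have hw : w ∈ ⨆ μ, Module.End.maxGenEigenspace (f : E →ₗ[ℂ] E) μ := by
    rw [Module.End.iSup_maxGenEigenspace_eq_top]; trivial
  refine Submodule.iSup_induction _ (motive := fun w =>
    ∃ C, ∀ t : ℝ, 0 ≤ t → ‖exp ((t : ℂ) • f) w‖ ≤ C * Real.exp (r * t)) hw ?_ ?_ ?_
  · intro μ w hw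
    by_cases hμ : μ ∈ spectrum ℂ f
    · exact exists_norm_exp_smul_apply_le_of_mem_maxGenEigenspace f hw (hr μ hμ)
    · have hw0 : w = 0 := by
        by_contra hw0
        have hgen : Module.End.HasUnifEigenvalue (f : E →ₗ[ℂ] E) μ ⊤ :=
          Submodule.ne_bot_iff _ |>.mpr ⟨w, hw, hw0⟩
        rw [spectrum_eq] at hμ
        exact hμ (hgen.lt zero_lt_one).mem_spectrum
      exact ⟨0, fun t _ => by simp [hw0]⟩
  · exact ⟨0, fun t _ => by simp⟩
  · rintro w₁ w₂ ⟨C₁, hC₁⟩ ⟨C₂, hC₂⟩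
    refine ⟨C₁ + C₂, fun t ht => ?_⟩
    rw [map_add, add_mul]
    exact (norm_add_le _ _).trans (add_le_add (hC₁ t ht) (hC₂ t ht))

theorem exists_norm_exp_smul_le (f : E →L[ℂ] E) {r : ℝ} (hr : ∀ μ ∈ spectrum ℂ f, μ.re < r) :
    ∃ C > 0, ∀ t : ℝ, 0 ≤ t → ‖exp ((t : ℂ) • f)‖ ≤ C * Real.exp (r * t) := by
  have horbit (w : E) : ∃ C, ∀ t : Set.Ici (0 : ℝ),
      ‖((Real.exp (-(r * t)) : ℂ) • exp ((t : ℂ) • f)) w‖ ≤ C := by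
    obtain ⟨C, hC⟩ := exists_norm_exp_smul_apply_le f hr w
    refine ⟨C, fun ⟨t, ht⟩ => ?_⟩
    rw [smul_apply, norm_smul, Complex.norm_real, Real.norm_of_nonneg (Real.exp_nonneg _),
      Real.exp_neg, inv_mul_le_iff₀ (Real.exp_pos _), mul_comm]
    exact hC t ht
  obtain ⟨C, hC⟩ := banach_steinhaus horbit
  refine ⟨max C 1, by positivity, fun t ht => ?_⟩
  have hCt := hC ⟨t, ht⟩
  rw [norm_smul, Complex.norm_real, Real.norm_of_nonneg (Real.exp_nonneg _), Real.exp_neg,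
    inv_mul_le_iff₀ (Real.exp_pos _)] at hCt
  calc ‖exp ((t : ℂ) • f)‖ ≤ Real.exp (r * t) * C := hCt
    _ ≤ max C 1 * Real.exp (r * t) := by rw [mul_comm]; gcongr; exact le_max_left _ _

end Complex

end ContinuousLinearMap

theorem EuclideanSpace.norm_toLp_ofReal {n : Type*} [Fintype n] (u : n → ℝ) :
    ‖WithLp.toLp 2 (fun i => (u i : ℂ))‖ = ‖WithLp.toLp 2 u‖ := by
  simp [EuclideanSpace.norm_eq]

namespace Matrix

variable {n : Type*} [Fintype n] [DecidableEq n]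

theorem l2_opNorm_le_l2_opNorm_map_ofReal {m : Type*} [Fintype m] (X : Matrix m n ℝ) :
    ‖X‖ ≤ ‖X.map (Complex.ofReal ·)‖ := by
  refine ContinuousLinearMap.opNorm_le_bound _ (norm_nonneg _) fun v => ?_
  have hmap : X.map (Complex.ofReal ·) *ᵥ (fun i => (v i : ℂ)) = fun i => ((X *ᵥ v.ofLp) i : ℂ) :=
    funext fun i => (Complex.ofRealHom.map_mulVec X v.ofLp i).symm
  calc ‖(toEuclideanLin.trans LinearMap.toContinuousLinearMap) X v‖
      = ‖WithLp.toLp 2 fun i => ((X *ᵥ v.ofLp) i : ℂ)‖ := (EuclideanSpace.norm_toLp_ofReal _).symm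
    _ ≤ ‖X.map (Complex.ofReal ·)‖ * ‖WithLp.toLp 2 fun i => (v i : ℂ)‖ := by
        rw [← hmap]
        exact (X.map (Complex.ofReal ·)).l2_opNorm_mulVec (WithLp.toLp 2 fun i => (v i : ℂ))
    _ = ‖X.map (Complex.ofReal ·)‖ * ‖v‖ := by rw [EuclideanSpace.norm_toLp_ofReal]

theorem exp_map_ofReal (X : Matrix n n ℝ) :
    (exp X).map (Complex.ofReal ·) = exp (X.map (Complex.ofReal ·)) :=
  let +nondep : NormedAlgebra ℚ (Matrix n n ℝ) := .restrictScalars ℚ ℝ _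
  map_exp Complex.ofRealHom.mapMatrix (continuous_id.matrix_map Complex.continuous_ofReal) X

theorem exists_l2_opNorm_exp_smul_le (M : Matrix n n ℂ) {r : ℝ}
    (hr : ∀ μ ∈ spectrum ℂ M, μ.re < r) :
    ∃ C > 0, ∀ t : ℝ, 0 ≤ t → ‖exp ((t : ℂ) • M)‖ ≤ C * Real.exp (r * t) := by
  rw [← AlgEquiv.spectrum_eq (toEuclideanCLM (𝕜 := ℂ) (n := n)).toAlgEquiv] at hr
  obtain ⟨C, hC, hbound⟩ := (toEuclideanCLM (𝕜 := ℂ) M).exists_norm_exp_smul_le hr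
  refine ⟨C, hC, fun t ht => ?_⟩
  have hcont : Continuous (toEuclideanCLM (𝕜 := ℂ) (n := n)) :=
    (AddMonoidHomClass.isometry_of_norm _ l2_opNorm_toEuclideanCLM).continuous
  let +nondep : NormedAlgebra ℚ (Matrix n n ℂ) := .restrictScalars ℚ ℂ _
  rw [← l2_opNorm_toEuclideanCLM, map_exp _ hcont, map_smul]
  exact hbound t ht

end Matrix

theorem matrix_exp_spectral_bound_general (n : ℕ)
    (A : Matrix (Fin n) (Fin n) ℝ) (β : ℝ)
    (hβ : IsGreatest {x : ℝ | ∃ μ ∈ spectrum ℂ (A.map (Complex.ofReal ·)), x = μ.re} β) :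
    ∀ κ > (0 : ℝ), ∃ ψ > (0 : ℝ), ∀ t ≥ (0 : ℝ),
      ‖NormedSpace.exp (t • A)‖ ≤ ψ * Real.exp ((β + κ) * t) := by
  intro κ hκ
  obtain ⟨ψ, hψ, hbound⟩ := (A.map (Complex.ofReal ·)).exists_l2_opNorm_exp_smul_le
    (r := β + κ) fun μ hμ => (hβ.2 ⟨μ, hμ, rfl⟩).trans_lt (lt_add_of_pos_right β hκ)
  refine ⟨ψ, hψ, fun t ht => ?_⟩
  have hsmul : (t • A).map (Complex.ofReal ·) = (t : ℂ) • A.map (Complex.ofReal ·) := by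
    ext; simp
  calc ‖exp (t • A)‖ ≤ ‖(exp (t • A)).map (Complex.ofReal ·)‖ :=
        Matrix.l2_opNorm_le_l2_opNorm_map_ofReal _
    _ = ‖exp ((t : ℂ) • A.map (Complex.ofReal ·))‖ := by rw [Matrix.exp_map_ofReal, hsmul]
    _ ≤ ψ * Real.exp ((β + κ) * t) := hbound t ht

/-- Lemma 2: spectral growth bound for the matrix exponential.
`β` is the largest real part among the complex eigenvalues of `A`; the norm on matrices is
the L2 operator norm. -/
theorem matrix_exp_spectral_bound (n : ℕ) (hn : 1 ≤ n)
    (A : Matrix (Fin n) (Fin n) ℝ) (β : ℝ)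
    (hβ : IsGreatest {x : ℝ | ∃ μ ∈ spectrum ℂ (A.map (Complex.ofReal ·)), x = μ.re} β) :
    ∀ κ > (0 : ℝ), ∃ ψ > (0 : ℝ), ∀ t ≥ (0 : ℝ),
      ‖NormedSpace.exp (t • A)‖ ≤ ψ * Real.exp ((β + κ) * t) :=
  matrix_exp_spectral_bound_general n A β hβ
end

section
/- Let A ∈ ℝ^{n×n}, B ∈ ℝ^{n×m}, C ∈ ℝ^{p×n}, S ∈ ℝ^{q×q}, and R ∈ ℝ^{p×q}. Suppose that for every complex eigenvalue λ of S, the complex block matrix [[A − λI_n, B], [C, 0]] (of size (n+p) × (n+m)) has rank n + p. Then there exist real matrices Π ∈ ℝ^{n×q} and Γ ∈ ℝ^{m×q} satisfying the regulator equations A·Π + B·Γ = Π·S and C·Π = R. -/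
/-!
Stack the unknowns as `X = [Π; Γ]`. The regulator equations then read `P X - Q X S = [0; R]` for
the pencil `P = [[A, B], [C, 0]]`, `Q = [[I, 0], [0, 0]]`, and the rank hypothesis says that
`P - λ Q` is onto for every eigenvalue `λ` of `S`. After vectorisation, `X ↦ P X - Q X S` is the
Kronecker matrix `1 ⊗ P - Sᵀ ⊗ Q`, which is onto as soon as its transpose is injective, i.e. as soon
as `Pᵀ Z = Qᵀ Z Sᵀ` forces `Z = 0`. For such a `Z` and any `v` with `(Sᵀ - μ) v ∈ ker Z`,
`(P - μ Q)ᵀ (Z v) = Qᵀ Z (Sᵀ - μ) v = 0`, so `v ∈ ker Z` when `μ` is an eigenvalue. Hence `ker Z`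
contains every generalized eigenspace of `Sᵀ`, and these span `ℂ^q`. Finally, the real parts of a
complex solution solve the real equations.
-/

open Matrix Module.End
open scoped Kronecker

theorem Submodule.eq_top_of_forall_hasEigenvalue_comap_le {K V : Type*} [Field K] [IsAlgClosed K]
    [AddCommGroup V] [Module K V] [FiniteDimensional K V] (f : Module.End K V)
    (U : Submodule K V) (hU : ∀ μ, f.HasEigenvalue μ → U.comap (f - μ • 1) ≤ U) : U = ⊤ := by
  rw [eq_top_iff, ← iSup_maxGenEigenspace_eq_top f, iSup_le_iff]
  intro μ v hv
  obtain ⟨k, hk⟩ := (mem_maxGenEigenspace f μ v).mp hv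
  clear hv
  induction k generalizing v with
  | zero =>
    rw [pow_zero, Module.End.one_apply] at hk
    exact hk ▸ U.zero_mem
  | succ k ih =>
    by_cases hvU : v ∈ U
    · exact hvU
    have hμ : f.HasEigenvalue μ := hasEigenvalue_of_hasGenEigenvalue (k := k + 1) <|
      (Submodule.ne_bot_iff _).mpr
        ⟨v, mem_genEigenspace_nat.mpr hk, fun hv0 => hvU (hv0 ▸ U.zero_mem)⟩
    exact hU μ hμ (ih (by rwa [pow_succ, Module.End.mul_apply] at hk))

namespace Matrix

variable {K l m n σ : Type*} [Field K]

section Rank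

variable [Fintype m] [Fintype n]

theorem mulVec_surjective_of_rank_eq_card {M : Matrix m n K} (h : M.rank = Fintype.card m) :
    Function.Surjective M.mulVec := by
  have : LinearMap.range M.mulVecLin = ⊤ :=
    Submodule.eq_top_of_finrank_eq (by rw [← rank, h, Module.finrank_fintype_fun_eq_card])
  exact LinearMap.range_eq_top.mp this

theorem vecMul_injective_iff_rank_eq_card {M : Matrix m n K} :
    Function.Injective M.vecMul ↔ M.rank = Fintype.card m := by
  rw [vecMul_injective_iff, linearIndependent_iff_card_eq_finrank_span, rank_eq_finrank_span_row,
    Set.finrank, eq_comm]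

end Rank

theorem spectrum_transpose [Fintype n] [DecidableEq n] (M : Matrix n n K) :
    spectrum K Mᵀ = spectrum K M := by
  ext μ
  simp [mem_spectrum_iff_not_isUnit_eval_charpoly, charpoly_transpose]

section Sylvester

variable [IsAlgClosed K] [Fintype σ] [DecidableEq σ]

theorem eq_zero_of_mul_eq_mul_mul [Fintype m] {P Q : Matrix n m K} {T : Matrix σ σ K}
    {Z : Matrix m σ K} (hPQ : ∀ μ ∈ spectrum K T, Function.Injective (P - μ • Q).mulVec)
    (hZ : P * Z = Q * Z * T) : Z = 0 := by
  have hker : LinearMap.ker Z.mulVecLin = ⊤ := by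
    refine Submodule.eq_top_of_forall_hasEigenvalue_comap_le (toLin' T) _ fun μ hμ v hv => ?_
    rw [hasEigenvalue_iff_mem_spectrum, spectrum_toLin'] at hμ
    replace hv : Z *ᵥ (T *ᵥ v - μ • v) = 0 := by simpa using hv
    refine hPQ μ hμ ?_
    calc (P - μ • Q) *ᵥ (Z *ᵥ v) = (Q * Z) *ᵥ (T *ᵥ v - μ • v) := by
          rw [mulVec_mulVec, Matrix.sub_mul, hZ, sub_mulVec, Matrix.smul_mul, smul_mulVec,
            ← mulVec_mulVec, mulVec_sub, mulVec_smul]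
      _ = (P - μ • Q) *ᵥ 0 := by rw [← mulVec_mulVec, hv, mulVec_zero, mulVec_zero]
  exact mulVec_injective (funext fun v => by simpa using hker.ge (Submodule.mem_top (x := v)))

theorem exists_mul_sub_mul_mul_eq [Fintype m] [Fintype n] {P Q : Matrix m n K}
    {S : Matrix σ σ K} (hPQ : ∀ μ ∈ spectrum K S, (P - μ • Q).rank = Fintype.card m)
    (Y : Matrix m σ K) : ∃ X : Matrix n σ K, P * X - Q * X * S = Y := by
  set T : Matrix (σ × m) (σ × n) K := 1 ⊗ₖ P - Sᵀ ⊗ₖ Q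
  have hT : ∀ X, T *ᵥ vec X = vec (P * X - Q * X * S) := fun X => by
    rw [sub_mulVec, kronecker_mulVec_vec, kronecker_mulVec_vec, transpose_one, transpose_transpose,
      Matrix.mul_one, vec_sub]
  have hTt : ∀ Z, vec Z ᵥ* T = vec (Pᵀ * Z - Qᵀ * Z * Sᵀ) := fun Z => by
    rw [vecMul_sub, vec_vecMul_kronecker, vec_vecMul_kronecker, Matrix.mul_one, vec_sub]
  have hinj : Function.Injective T.vecMul := by
    rw [← coe_vecMulLinear, injective_iff_map_eq_zero]
    intro z hz
    obtain ⟨Z, rfl⟩ := vec_bijective.surjective z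
    change vec Z ᵥ* T = 0 at hz
    rw [hTt, vec_eq_zero_iff, sub_eq_zero] at hz
    rw [vec_eq_zero_iff]
    refine eq_zero_of_mul_eq_mul_mul (fun μ hμ => ?_) hz
    rw [spectrum_transpose] at hμ
    simpa only [← transpose_smul, ← transpose_sub, funext (mulVec_transpose _)]
      using vecMul_injective_iff_rank_eq_card.mpr (hPQ μ hμ)
  obtain ⟨x, hx⟩ :=
    mulVec_surjective_of_rank_eq_card (vecMul_injective_iff_rank_eq_card.mp hinj) (vec Y)
  obtain ⟨X, rfl⟩ := vec_bijective.surjective x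
  exact ⟨X, vec_inj.mp ((hT X).symm.trans hx)⟩

end Sylvester

theorem map_re_ofReal_mul [Fintype n] (A : Matrix m n ℝ) (X : Matrix n l ℂ) :
    (A.map Complex.ofReal * X).map Complex.re = A * X.map Complex.re := by
  ext i j
  simp [mul_apply, Complex.re_sum]

theorem map_re_mul_ofReal [Fintype l] (X : Matrix m l ℂ) (A : Matrix l n ℝ) :
    (X * A.map Complex.ofReal).map Complex.re = X.map Complex.re * A := by
  ext i j
  simp [mul_apply]

theorem exists_mul_sub_mul_mul_eq_of_complex [Fintype n] [Fintype σ] {P Q : Matrix m n ℝ}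
    {S : Matrix σ σ ℝ} {Y : Matrix m σ ℝ} (h : ∃ X : Matrix n σ ℂ,
      P.map Complex.ofReal * X - Q.map Complex.ofReal * X * S.map Complex.ofReal =
        Y.map Complex.ofReal) :
    ∃ X : Matrix n σ ℝ, P * X - Q * X * S = Y := by
  obtain ⟨X, hX⟩ := h
  refine ⟨X.map Complex.re, ?_⟩
  simpa [Matrix.map_sub, map_re_ofReal_mul, map_re_mul_ofReal, Function.comp_def]
    using congrArg (Matrix.map · Complex.re) hX

theorem fromBlocks_mul_sub_mul_mul_eq_fromRows {R : Type*} [CommRing R] [Fintype n] [Fintype l]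
    [DecidableEq n] [Fintype σ] (A : Matrix n n R) (B : Matrix n l R) (C : Matrix m n R)
    (S : Matrix σ σ R) (X₁ : Matrix n σ R) (X₂ : Matrix l σ R) :
    fromBlocks A B C 0 * fromRows X₁ X₂ -
        (fromBlocks 1 0 0 0 : Matrix (n ⊕ m) (n ⊕ l) R) * fromRows X₁ X₂ * S =
      fromRows (A * X₁ + B * X₂ - X₁ * S) (C * X₁) := by
  rw [fromBlocks_mul_fromRows, fromBlocks_mul_fromRows, fromRows_mul]
  ext (i | i) j <;> simp

end Matrix

/-- Lemma 3: solvability of the regulator equations under the non-resonance rank condition.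
For every eigenvalue `λ` of `S` (viewed as a complex matrix), the block matrix
`[[A - λI, B], [C, 0]]` has full row rank `n + p`; then the regulator equations
`A·Π + B·Γ = Π·S` and `C·Π = R` admit real solutions `Π`, `Γ`. -/
theorem regulator_equations_solvable (n m p q : ℕ)
    (A : Matrix (Fin n) (Fin n) ℝ) (B : Matrix (Fin n) (Fin m) ℝ)
    (C : Matrix (Fin p) (Fin n) ℝ) (S : Matrix (Fin q) (Fin q) ℝ)
    (R : Matrix (Fin p) (Fin q) ℝ)
    (hrank : ∀ lam ∈ spectrum ℂ (S.map (Complex.ofReal ·)),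
      (Matrix.fromBlocks
        (A.map (Complex.ofReal ·) - lam • (1 : Matrix (Fin n) (Fin n) ℂ))
        (B.map (Complex.ofReal ·))
        (C.map (Complex.ofReal ·))
        (0 : Matrix (Fin p) (Fin m) ℂ)).rank = n + p) :
    ∃ (Pi : Matrix (Fin n) (Fin q) ℝ) (Γ : Matrix (Fin m) (Fin q) ℝ),
      A * Pi + B * Γ = Pi * S ∧ C * Pi = R := by
  set P : Matrix (Fin n ⊕ Fin p) (Fin n ⊕ Fin m) ℝ := fromBlocks A B C 0
  set Q : Matrix (Fin n ⊕ Fin p) (Fin n ⊕ Fin m) ℝ := fromBlocks 1 0 0 0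
  have hpencil : ∀ μ ∈ spectrum ℂ (S.map Complex.ofReal),
      (P.map Complex.ofReal - μ • Q.map Complex.ofReal).rank = Fintype.card (Fin n ⊕ Fin p) :=
    fun μ hμ => by
      convert hrank μ hμ using 2
      · simp [P, Q, fromBlocks_map, fromBlocks_smul, sub_eq_add_neg, fromBlocks_neg,
          fromBlocks_add]
      · simp
  obtain ⟨X, hX⟩ := exists_mul_sub_mul_mul_eq_of_complex
    (exists_mul_sub_mul_mul_eq hpencil ((fromRows 0 R).map Complex.ofReal))
  rw [← fromRows_toRows X, fromBlocks_mul_sub_mul_mul_eq_fromRows, fromRows_ext_iff,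
    sub_eq_zero] at hX
  exact ⟨_, _, hX⟩
end
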